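/- arXiv:1603.05134 — 11 statements merged into one kernel-verified Lean document; each statement's English description precedes it below -/
import Mathlib

section
/- For any integers x and y with 1 ≤ x < y, there exist a positive integer f and an odd positive integer q such that (q-1)·2^(f-1) < x ≤ q·2^(f-1) < y ≤ (q+1)·2^(f-1). -/
/-!
Take the largest `v` such that `[x, y)` contains a multiple `k * 2 ^ v` of `2 ^ v`; it exists
because `x > 0`. No multiple of `2 ^ (v + 1)` lies in `[x, y)`, so `k` is odd, and the even
multiples `(k - 1) * 2 ^ v` and `(k + 1) * 2 ^ v` of `2 ^ v` fall outside `[x, y)` on either side.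
-/

open Set

theorem Int.exists_max_pow_two_dvd_mem_Ico {x y : ℤ} (hx : 0 < x) (hxy : x < y) :
    ∃ v : ℕ, (∃ z ∈ Ico x y, 2 ^ v ∣ z) ∧ ∀ z ∈ Ico x y, ¬ 2 ^ (v + 1) ∣ z := by
  have hbound : ∃ n : ℕ, ∀ z ∈ Ico x y, ¬ (2 : ℤ) ^ n ∣ z := by
    refine ⟨y.toNat, fun z hz hdvd => ?_⟩
    have hy : y < 2 ^ y.toNat := by
      calc y ≤ y.toNat := Int.self_le_toNat y
        _ < 2 ^ y.toNat := by exact_mod_cast Nat.lt_two_pow_self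
    have := Int.le_of_dvd (hx.trans_le hz.1) hdvd
    linarith [hz.2]
  classical
  have hpos : Nat.find hbound ≠ 0 := fun h0 =>
    Nat.find_spec hbound x ⟨le_rfl, hxy⟩ (by rw [h0, pow_zero]; exact one_dvd x)
  obtain ⟨v, hv⟩ := Nat.exists_eq_succ_of_ne_zero hpos
  have hmin := Nat.find_min hbound (hv ▸ v.lt_succ_self)
  push Not at hmin
  have hspec := Nat.find_spec hbound
  rw [hv] at hspec
  exact ⟨v, hmin, hspec⟩

theorem Int.odd_and_neighbours_not_mem_Ico {x y m k : ℤ} (hm : 0 < m)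
    (h : ∀ z ∈ Ico x y, ¬ 2 * m ∣ z) (hk : k * m ∈ Ico x y) :
    Odd k ∧ (k - 1) * m < x ∧ y ≤ (k + 1) * m := by
  have hodd : Odd k := Int.not_even_iff_odd.1 fun heven =>
    h _ hk (mul_dvd_mul_right (even_iff_two_dvd.1 heven) m)
  have hdvd_pred : 2 * m ∣ (k - 1) * m :=
    mul_dvd_mul_right (even_iff_two_dvd.1 (hodd.sub_odd odd_one)) m
  have hdvd_succ : 2 * m ∣ (k + 1) * m :=
    mul_dvd_mul_right (even_iff_two_dvd.1 hodd.add_one) m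
  refine ⟨hodd, ?_, ?_⟩
  · by_contra! hle
    exact h _ ⟨hle, by nlinarith [hk.2]⟩ hdvd_pred
  · by_contra! hlt
    exact h _ ⟨by nlinarith [hk.1], hlt⟩ hdvd_succ

theorem stmt_0 (x y : ℤ) (hx : 1 ≤ x) (hxy : x < y) :
    ∃ f q : ℕ, 0 < f ∧ 0 < q ∧ Odd q ∧
      ((q : ℤ) - 1) * 2 ^ (f - 1) < x ∧ x ≤ (q : ℤ) * 2 ^ (f - 1) ∧
      (q : ℤ) * 2 ^ (f - 1) < y ∧ y ≤ ((q : ℤ) + 1) * 2 ^ (f - 1) := by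
  obtain ⟨v, ⟨_, hk, k, rfl⟩, hnone⟩ := Int.exists_max_pow_two_dvd_mem_Ico hx hxy
  rw [mul_comm] at hk
  have hpow : (0 : ℤ) < 2 ^ v := by positivity
  obtain ⟨hodd, hpred, hsucc⟩ :=
    Int.odd_and_neighbours_not_mem_Ico hpow (by simpa only [pow_succ'] using hnone) hk
  lift k to ℕ using by nlinarith [hk.1]
  rw [Int.odd_coe_nat] at hodd
  refine ⟨v + 1, k, v.succ_pos, hodd.pos, hodd, ?_⟩
  simpa only [Nat.add_sub_cancel] using ⟨hpred, hk.1, hk.2, hsucc⟩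
end

section
/- For any integers x and y with 1 ≤ x < y, the pair (f, q) with f a positive integer, q an odd positive integer, and (q-1)·2^(f-1) < x ≤ q·2^(f-1) < y ≤ (q+1)·2^(f-1) is uniquely determined by x and y. -/
/-! If `f ≤ f'`, then `q' * 2^(f'-1) = (q' * 2^(f'-f)) * 2^(f-1)` lies strictly between
`(q-1) * 2^(f-1)` and `(q+1) * 2^(f-1)`, so `q' * 2^(f'-f) = q`; as `q` is odd, `f' = f`. -/

lemma Int.eq_of_sub_one_mul_lt_of_lt_add_one_mul {q k c : ℤ} (hc : 0 < c)
    (h₁ : (q - 1) * c < k * c) (h₂ : k * c < (q + 1) * c) : k = q := by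
  have := lt_of_mul_lt_mul_right h₁ hc.le
  have := lt_of_mul_lt_mul_right h₂ hc.le
  omega

lemma Nat.eq_zero_of_odd_of_eq_mul_two_pow {q q' d : ℕ} (hq : Odd q) (h : q' * 2 ^ d = q) :
    d = 0 := by
  by_contra hd
  rw [← h, Nat.odd_mul, Nat.odd_pow_iff hd] at hq
  exact Nat.not_odd_iff_even.mpr even_two hq.2

lemma odd_mul_two_pow_eq_of_mem_window {x y : ℤ} {q q' e e' : ℕ} (hq : Odd q) (he : e ≤ e')
    (h₁ : ((q : ℤ) - 1) * 2 ^ e < x) (h₂ : x ≤ (q' : ℤ) * 2 ^ e')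
    (h₃ : (q' : ℤ) * 2 ^ e' < y) (h₄ : y ≤ ((q : ℤ) + 1) * 2 ^ e) :
    e = e' ∧ q = q' := by
  obtain ⟨d, rfl⟩ := Nat.exists_eq_add_of_le he
  have hsplit : (q' : ℤ) * 2 ^ (e + d) = ((q' * 2 ^ d : ℕ) : ℤ) * 2 ^ e := by
    push_cast; ring
  rw [hsplit] at h₂ h₃
  have hk : q' * 2 ^ d = q := by
    exact_mod_cast Int.eq_of_sub_one_mul_lt_of_lt_add_one_mul (by positivity)
      (h₁.trans_le h₂) (h₃.trans_le h₄)
  obtain rfl := Nat.eq_zero_of_odd_of_eq_mul_two_pow hq hk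
  simpa [eq_comm] using hk

theorem stmt_1_general (x y : ℤ) (f q f' q' : ℕ)
    (hf : 0 < f) (hqo : Odd q)
    (hf' : 0 < f') (hqo' : Odd q')
    (h1 : ((q : ℤ) - 1) * 2 ^ (f - 1) < x) (h2 : x ≤ (q : ℤ) * 2 ^ (f - 1))
    (h3 : (q : ℤ) * 2 ^ (f - 1) < y) (h4 : y ≤ ((q : ℤ) + 1) * 2 ^ (f - 1))
    (h1' : ((q' : ℤ) - 1) * 2 ^ (f' - 1) < x) (h2' : x ≤ (q' : ℤ) * 2 ^ (f' - 1))
    (h3' : (q' : ℤ) * 2 ^ (f' - 1) < y) (h4' : y ≤ ((q' : ℤ) + 1) * 2 ^ (f' - 1)) :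
    f = f' ∧ q = q' := by
  rcases le_total (f - 1) (f' - 1) with h | h
  · obtain ⟨he, rfl⟩ := odd_mul_two_pow_eq_of_mem_window hqo h h1 h2' h3' h4
    exact ⟨by omega, rfl⟩
  · obtain ⟨he, rfl⟩ := odd_mul_two_pow_eq_of_mem_window hqo' h h1' h2 h3 h4'
    exact ⟨by omega, rfl⟩

theorem stmt_1 (x y : ℤ) (hx : 1 ≤ x) (hxy : x < y) (f q f' q' : ℕ)
    (hf : 0 < f) (hq : 0 < q) (hqo : Odd q)
    (hf' : 0 < f') (hq' : 0 < q') (hqo' : Odd q')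
    (h1 : ((q : ℤ) - 1) * 2 ^ (f - 1) < x) (h2 : x ≤ (q : ℤ) * 2 ^ (f - 1))
    (h3 : (q : ℤ) * 2 ^ (f - 1) < y) (h4 : y ≤ ((q : ℤ) + 1) * 2 ^ (f - 1))
    (h1' : ((q' : ℤ) - 1) * 2 ^ (f' - 1) < x) (h2' : x ≤ (q' : ℤ) * 2 ^ (f' - 1))
    (h3' : (q' : ℤ) * 2 ^ (f' - 1) < y) (h4' : y ≤ ((q' : ℤ) + 1) * 2 ^ (f' - 1)) :
    f = f' ∧ q = q' :=
  stmt_1_general x y f q f' q' hf hqo hf' hqo' h1 h2 h3 h4 h1' h2' h3' h4'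
end

section
/- For any three positive integers x, y, z with x < y ≤ z, the inequality f(x, y) ≤ f(x, z) holds, where for integers a < b, f(a, b) denotes the unique positive integer f for which there exists an odd positive integer q with (q-1)·2^(f-1) < a ≤ q·2^(f-1) < b ≤ (q+1)·2^(f-1). -/
/-- `IsFQ x y f q` says that `f` is a positive integer and `q` an odd positive
integer with `(q-1)·2^(f-1) < x ≤ q·2^(f-1) < y ≤ (q+1)·2^(f-1)`; for `1 ≤ x < y`
such a pair `(f, q)` exists and is unique, so it defines `f(x,y)` and `q(x,y)`. -/
def IsFQ (x y f q : ℕ) : Prop :=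
  0 < f ∧ 0 < q ∧ Odd q ∧
    (q - 1) * 2 ^ (f - 1) < x ∧ x ≤ q * 2 ^ (f - 1) ∧
    q * 2 ^ (f - 1) < y ∧ y ≤ (q + 1) * 2 ^ (f - 1)

/-! `f(x, y) - 1` is the largest 2-adic valuation of an integer in `[x, y)`: that interval lies
strictly between the consecutive multiples `(q ∓ 1)·2^(f-1)`, so the only multiple of `2^(f-1)`
in it is the odd multiple `q·2^(f-1)`. Enlarging `y` can therefore only increase `f`. -/

theorem IsFQ.not_two_pow_dvd {x y f q m : ℕ} (h : IsFQ x y f q) (hxm : x ≤ m) (hmy : m < y) :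
    ¬ 2 ^ f ∣ m := by
  obtain ⟨hf, -, hq, hlow, -, -, hup⟩ := h
  rintro ⟨k, rfl⟩
  have hm : 2 ^ f * k = 2 * k * 2 ^ (f - 1) := by
    rw [← Nat.sub_add_cancel hf, pow_succ, Nat.add_sub_cancel]; ring
  rw [hm] at hxm hmy
  have hlt : q - 1 < 2 * k := Nat.lt_of_mul_lt_mul_right (hlow.trans_le hxm)
  have hgt : 2 * k < q + 1 := Nat.lt_of_mul_lt_mul_right (hmy.trans_le hup)
  obtain ⟨r, rfl⟩ := hq
  omega

theorem stmt_2_general (x y z f₁ q₁ f₂ q₂ : ℕ) (hyz : y ≤ z)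
    (h₁ : IsFQ x y f₁ q₁) (h₂ : IsFQ x z f₂ q₂) :
    f₁ ≤ f₂ := by
  by_contra! hlt
  obtain ⟨-, -, -, -, hx, hy, -⟩ := h₁
  refine h₂.not_two_pow_dvd hx (hy.trans_le hyz) (Dvd.dvd.mul_left ?_ q₁)
  exact pow_dvd_pow 2 (by omega)

theorem stmt_2 (x y z f₁ q₁ f₂ q₂ : ℕ) (hx : 0 < x) (hxy : x < y) (hyz : y ≤ z)
    (h₁ : IsFQ x y f₁ q₁) (h₂ : IsFQ x z f₂ q₂) :
    f₁ ≤ f₂ :=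
  stmt_2_general x y z f₁ q₁ f₂ q₂ hyz h₁ h₂
end

section
/- For any positive integers x < y ≤ z with f(x, y) = f(x, z), we also have q(x, y) = q(x, z), and consequently, writing f for the common value of f(x,y) and f(x,z) and q for the common value of q(x,y) and q(x,z), the chain (q-1)·2^(f-1) < x ≤ q·2^(f-1) < y ≤ z ≤ (q+1)·2^(f-1) holds. -/
/-! Once `f` is fixed, `q` is the ceiling of `x / 2^(f-1)`, so it does not depend on the
upper endpoint. -/

theorem Nat.le_of_sub_one_mul_lt_of_le_mul {m x q q' : ℕ} (h' : (q' - 1) * m < x)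
    (h : x ≤ q * m) : q' ≤ q := by
  have : q' - 1 < q := Nat.lt_of_mul_lt_mul_right (h'.trans_le h)
  omega

theorem IsFQ.q_eq {x y z f q₁ q₂ : ℕ} (h₁ : IsFQ x y f q₁) (h₂ : IsFQ x z f q₂) :
    q₁ = q₂ :=
  le_antisymm (Nat.le_of_sub_one_mul_lt_of_le_mul h₁.2.2.2.1 h₂.2.2.2.2.1)
    (Nat.le_of_sub_one_mul_lt_of_le_mul h₂.2.2.2.1 h₁.2.2.2.2.1)

theorem stmt_3_general (x y z f q₁ q₂ : ℕ) (hyz : y ≤ z)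
    (h₁ : IsFQ x y f q₁) (h₂ : IsFQ x z f q₂) :
    q₁ = q₂ ∧
      (q₁ - 1) * 2 ^ (f - 1) < x ∧ x ≤ q₁ * 2 ^ (f - 1) ∧
      q₁ * 2 ^ (f - 1) < y ∧ y ≤ z ∧ z ≤ (q₁ + 1) * 2 ^ (f - 1) := by
  obtain rfl := h₁.q_eq h₂
  obtain ⟨-, -, -, hlow, hx, hy, -⟩ := h₁
  exact ⟨rfl, hlow, hx, hy, hyz, h₂.2.2.2.2.2.2⟩

theorem stmt_3 (x y z f q₁ q₂ : ℕ) (hx : 0 < x) (hxy : x < y) (hyz : y ≤ z)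
    (h₁ : IsFQ x y f q₁) (h₂ : IsFQ x z f q₂) :
    q₁ = q₂ ∧
      (q₁ - 1) * 2 ^ (f - 1) < x ∧ x ≤ q₁ * 2 ^ (f - 1) ∧
      q₁ * 2 ^ (f - 1) < y ∧ y ≤ z ∧ z ≤ (q₁ + 1) * 2 ^ (f - 1) :=
  stmt_3_general x y z f q₁ q₂ hyz h₁ h₂
end

section
/- If four positive integers t, x, y, z satisfy t ≤ x < y ≤ z and f(x, y) = f(x, z), then f(t, y) = f(t, z). -/
/-!
Call `q·2^(f-1)` the dyadic point of `[a, b)`: it lies in `[a, b)`, while `[a, b)` contains no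
multiple of `2^f`, because `q` is odd and `(q-1)·2^(f-1) < a`, `b ≤ (q+1)·2^(f-1)`. Hence `f - 1`
is the largest `k` for which `[a, b)` contains a multiple of `2^k`, so `f` grows with the interval
and `f(x,y) ≤ f(t,y) ≤ f(t,z)`. If the last inequality were strict, the dyadic point of `[t, z)`
would be a multiple of `2^f(t,y)`, hence would lie in `[y, z) ⊆ [x, z)`; being also a multiple of
`2^f(x,z) = 2^f(x,y)`, it contradicts the choice of `f(x,z)`.
-/

namespace IsFQ

variable {a b f q : ℕ}

lemma le_mid (h : IsFQ a b f q) : a ≤ q * 2 ^ (f - 1) := h.2.2.2.2.1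

lemma mid_lt (h : IsFQ a b f q) : q * 2 ^ (f - 1) < b := h.2.2.2.2.2.1

lemma le_of_pow_dvd (h : IsFQ a b f q) {m : ℕ} (hdvd : 2 ^ f ∣ m) (ham : a ≤ m) : b ≤ m := by
  obtain ⟨hf, -, hodd, hlow, -, -, hup⟩ := h
  obtain ⟨c, rfl⟩ := hdvd
  have hsplit : 2 ^ f * c = 2 * c * 2 ^ (f - 1) := by
    rw [show f = f - 1 + 1 by omega, pow_succ, Nat.add_sub_cancel]; ring
  rw [hsplit] at ham ⊢
  have hqc : q - 1 < 2 * c := Nat.lt_of_mul_lt_mul_right (hlow.trans_le ham)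
  have hq := Nat.odd_iff.mp hodd
  calc b ≤ (q + 1) * 2 ^ (f - 1) := hup
    _ ≤ 2 * c * 2 ^ (f - 1) := Nat.mul_le_mul_right _ (by omega)

lemma lt_of_pow_dvd (h : IsFQ a b f q) {k m : ℕ} (hdvd : 2 ^ k ∣ m) (hm : m ∈ Set.Ico a b) :
    k < f := by
  by_contra! hfk
  exact (h.le_of_pow_dvd ((pow_dvd_pow 2 hfk).trans hdvd) hm.1).not_gt hm.2

lemma le_of_Ico_subset {a' b' g p : ℕ} (h : IsFQ a b f q) (h' : IsFQ a' b' g p)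
    (hsub : Set.Ico a b ⊆ Set.Ico a' b') : f ≤ g := by
  have := h'.lt_of_pow_dvd (dvd_mul_left _ q) (hsub ⟨h.le_mid, h.mid_lt⟩)
  have := h.1
  omega

end IsFQ

theorem stmt_4_general (t x y z : ℕ) (htx : t ≤ x) (hxy : x < y) (hyz : y ≤ z)
    (f q₁ q₂ g₁ p₁ g₂ p₂ : ℕ)
    (hxyf : IsFQ x y f q₁) (hxzf : IsFQ x z f q₂)
    (hty : IsFQ t y g₁ p₁) (htz : IsFQ t z g₂ p₂) :
    g₁ = g₂ := by
  have hfg₁ : f ≤ g₁ := hxyf.le_of_Ico_subset hty (Set.Ico_subset_Ico htx le_rfl)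
  have hg₁g₂ : g₁ ≤ g₂ := hty.le_of_Ico_subset htz (Set.Ico_subset_Ico le_rfl hyz)
  by_contra hne
  have hdvd : 2 ^ g₁ ∣ p₂ * 2 ^ (g₂ - 1) :=
    (pow_dvd_pow 2 (by omega)).trans (dvd_mul_left _ _)
  have hym : y ≤ p₂ * 2 ^ (g₂ - 1) := hty.le_of_pow_dvd hdvd htz.le_mid
  have hzm : z ≤ p₂ * 2 ^ (g₂ - 1) :=
    hxzf.le_of_pow_dvd ((pow_dvd_pow 2 hfg₁).trans hdvd) (hxy.le.trans hym)
  exact htz.mid_lt.not_ge hzm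

theorem stmt_4 (t x y z : ℕ) (ht : 0 < t) (htx : t ≤ x) (hxy : x < y) (hyz : y ≤ z)
    (f q₁ q₂ g₁ p₁ g₂ p₂ : ℕ)
    (hxyf : IsFQ x y f q₁) (hxzf : IsFQ x z f q₂)
    (hty : IsFQ t y g₁ p₁) (htz : IsFQ t z g₂ p₂) :
    g₁ = g₂ :=
  stmt_4_general t x y z htx hxy hyz f q₁ q₂ g₁ p₁ g₂ p₂ hxyf hxzf hty htz
end

section
/- For any integers x and y with 1 ≤ x < y ≤ 2^n, we have f(x, y) ∈ [1, n], f(2^n + 1 - y, 2^n + 1 - x) = f(x, y), and q(2^n + 1 - y, 2^n + 1 - x) = 2^(n+1-f) - q(x, y), where f = f(x, y). -/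
namespace IsFQ

variable {x y f q : ℕ}

theorem eq_of_le_mul_of_mul_lt (h : IsFQ x y f q) {k : ℕ} (hxk : x ≤ k * 2 ^ (f - 1))
    (hky : k * 2 ^ (f - 1) < y) : k = q := by
  obtain ⟨-, -, -, hlo, -, -, hhi⟩ := h
  have hk₁ : q - 1 < k := Nat.lt_of_mul_lt_mul_right (hlo.trans_le hxk)
  have hk₂ : k < q + 1 := Nat.lt_of_mul_lt_mul_right (hky.trans_le hhi)
  omega

theorem unique_of_le {g p : ℕ} (hfg : f ≤ g) (h : IsFQ x y f q) (h' : IsFQ x y g p) :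
    f = g ∧ q = p := by
  have hf := h.1
  have hsplit : p * 2 ^ (g - 1) = p * 2 ^ (g - f) * 2 ^ (f - 1) := by
    rw [mul_assoc, ← pow_add]
    congr 2
    omega
  obtain ⟨hg, -, -, -, hxp, hpy, -⟩ := h'
  have hk : p * 2 ^ (g - f) = q := h.eq_of_le_mul_of_mul_lt (hsplit ▸ hxp) (hsplit ▸ hpy)
  have hgf : g - f = 0 := by
    by_contra hne
    have heven : Even (p * 2 ^ (g - f)) := (Nat.even_pow.2 ⟨even_two, hne⟩).mul_left p
    exact Nat.not_even_iff_odd.2 h.2.2.1 (hk ▸ heven)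
  rw [hgf, pow_zero, mul_one] at hk
  exact ⟨by omega, hk.symm⟩

theorem unique {g p : ℕ} (h : IsFQ x y f q) (h' : IsFQ x y g p) : f = g ∧ q = p := by
  rcases le_total f g with hfg | hgf
  · exact unique_of_le hfg h h'
  · obtain ⟨hgf, hpq⟩ := unique_of_le hgf h' h
    exact ⟨hgf.symm, hpq.symm⟩

theorem le_of_le_two_pow {n : ℕ} (h : IsFQ x y f q) (hy : y ≤ 2 ^ n) : f ≤ n := by
  obtain ⟨hf, hq, -, -, -, hqy, -⟩ := h
  have hlt : 2 ^ (f - 1) < 2 ^ n :=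
    (Nat.le_mul_of_pos_left _ hq).trans_lt (hqy.trans_le hy)
  have := (Nat.pow_lt_pow_iff_right (by norm_num : 1 < 2)).1 hlt
  omega

theorem reflect {c : ℕ} (hc : Even c) (h : IsFQ x y f q) (hy : y ≤ c * 2 ^ (f - 1)) :
    IsFQ (c * 2 ^ (f - 1) + 1 - y) (c * 2 ^ (f - 1) + 1 - x) f (c - q) := by
  obtain ⟨hf, hq, hqo, hlo, hxq, hqy, hhi⟩ := h
  have hqc : q < c := Nat.lt_of_mul_lt_mul_right (hqy.trans_le hy)
  have hodd : Odd (c - q) := Nat.Even.sub_odd hqc.le hc hqo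
  have hpos : 0 < 2 ^ (f - 1) := Nat.two_pow_pos _
  have hqa : q * 2 ^ (f - 1) + 2 ^ (f - 1) ≤ c * 2 ^ (f - 1) := by
    rw [← Nat.succ_mul]
    exact Nat.mul_le_mul_right _ hqc
  refine ⟨hf, by omega, hodd, ?_, ?_, ?_, ?_⟩ <;>
  · simp only [Nat.sub_mul, Nat.add_mul, one_mul] at *
    omega

end IsFQ

theorem stmt_5_general (n x y f q f' q' : ℕ) (hy : y ≤ 2 ^ n)
    (h : IsFQ x y f q)
    (h' : IsFQ (2 ^ n + 1 - y) (2 ^ n + 1 - x) f' q') :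
    1 ≤ f ∧ f ≤ n ∧ f' = f ∧ q' = 2 ^ (n + 1 - f) - q := by
  have hf : 1 ≤ f := h.1
  have hfn : f ≤ n := h.le_of_le_two_pow hy
  have hsplit : 2 ^ (n + 1 - f) * 2 ^ (f - 1) = 2 ^ n := by
    rw [← pow_add]
    congr 1
    omega
  have heven : Even (2 ^ (n + 1 - f)) := Nat.even_pow.2 ⟨even_two, by omega⟩
  have hrefl := h.reflect heven (hsplit ▸ hy)
  rw [hsplit] at hrefl
  obtain ⟨rfl, rfl⟩ := h'.unique hrefl
  exact ⟨hf, hfn, rfl, rfl⟩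

theorem stmt_5 (n x y f q f' q' : ℕ) (hn : 0 < n)
    (hx : 1 ≤ x) (hxy : x < y) (hy : y ≤ 2 ^ n)
    (h : IsFQ x y f q)
    (h' : IsFQ (2 ^ n + 1 - y) (2 ^ n + 1 - x) f' q') :
    1 ≤ f ∧ f ≤ n ∧ f' = f ∧ q' = 2 ^ (n + 1 - f) - q :=
  stmt_5_general n x y f q f' q' hy h h'
end

section
/- The chromatic number of the graph G_2(2^k) is at most 2k - 1 for every positive integer k. -/
/-- Vertex set of `G₂(n)`: triples `(x, y, z)` with `1 ≤ x ≤ y ≤ z ≤ n` and `x < z`. -/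
def V2 (n : ℕ) :=
  {p : ℕ × ℕ × ℕ // 1 ≤ p.1 ∧ p.1 ≤ p.2.1 ∧ p.2.1 ≤ p.2.2 ∧ p.2.2 ≤ n ∧ p.1 < p.2.2}

/-- `rel2 (x,y,z) (x',y',z')` holds iff `x < x' ≤ z < z'`, `y ≤ x'` and `z ≤ y'`. -/
def rel2 (p q : ℕ × ℕ × ℕ) : Prop :=
  p.1 < q.1 ∧ q.1 ≤ p.2.2 ∧ p.2.2 < q.2.2 ∧ p.2.1 ≤ q.1 ∧ p.2.2 ≤ q.2.1

/-- The graph `G₂(n)`. -/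
def G2 (n : ℕ) : SimpleGraph (V2 n) where
  Adj a b := rel2 a.1 b.1 ∨ rel2 b.1 a.1
  symm := ⟨fun a b h => h.symm⟩
  loopless := ⟨fun a h => by rcases h with h | h <;> exact lt_irrefl _ h.1⟩

/-! Colour the vertex `(x, y, z)` through the interval `[x, z - 1]`. An element `t` of largest
2-adic valuation `m` in it is unique, since strictly between two numbers of valuation `m` and
up to the larger one lies a multiple of `2 ^ (m + 1)`. The colour records `m` and whether `y ≤ t`.
Along an edge from `(x, y, z)` to `(x', y', z')` the intervals `[x, z - 1]` and `[x', z' - 1]`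
overlap or abut, so equal `m` forces equal `t`, which then lies in `[x', z - 1]`; thus
`y ≤ x' ≤ t < z ≤ y'` and the second component differs. As `t < 2 ^ k` we have `m < k`, and
`m = 0` forces `z = x + 1`, leaving no room for `x' ≤ t`: the two colours with `m = 0` merge,
which leaves `2k - 1` colours. -/

open Finset

theorem exists_mem_Ioc_padicValNat_two_lt {s s' : ℕ} (hs : 0 < s) (hlt : s < s')
    (hval : padicValNat 2 s = padicValNat 2 s') :
    ∃ c ∈ Ioc s s', padicValNat 2 s < padicValNat 2 c := by
  set m := padicValNat 2 s
  have hndvd : ¬ 2 ^ (m + 1) ∣ s := pow_succ_padicValNat_not_dvd hs.ne'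
  obtain ⟨u, hu⟩ : 2 ^ m ∣ s := pow_padicValNat_dvd
  obtain ⟨w, hw⟩ : Odd u :=
    Nat.not_even_iff_odd.1 fun ⟨w, hw⟩ => hndvd ⟨w, by rw [hu, hw, pow_succ]; ring⟩
  have hgap : 2 ^ m ≤ s' - s :=
    Nat.le_of_dvd (by omega) (Nat.dvd_sub (hval ▸ pow_padicValNat_dvd) ⟨u, hu⟩)
  have hdvd : 2 ^ (m + 1) ∣ s + 2 ^ m := ⟨w + 1, by rw [hu, hw, pow_succ]; ring⟩
  have hpos : 0 < 2 ^ m := by positivity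
  exact ⟨s + 2 ^ m, mem_Ioc.2 ⟨by omega, by omega⟩,
    (padicValNat_dvd_iff_le (by positivity)).1 hdvd⟩

theorem eq_of_padicValNat_two_eq_of_forall_mem_Icc_le {a b m s s' : ℕ} (ha : 0 < a)
    (hle : ∀ c ∈ Icc a b, padicValNat 2 c ≤ m) (hs : s ∈ Icc a b) (hs' : s' ∈ Icc a b)
    (hsm : padicValNat 2 s = m) (hs'm : padicValNat 2 s' = m) : s = s' := by
  wlog hlt : s < s' generalizing s s'
  · rcases (not_lt.1 hlt).eq_or_lt with h | h
    · exact h.symm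
    · exact (this hs' hs hs'm hsm h).symm
  obtain ⟨c, hc, hmc⟩ :=
    exists_mem_Ioc_padicValNat_two_lt (ha.trans_le (mem_Icc.1 hs).1) hlt (hsm.trans hs'm.symm)
  have := hle c (by grind)
  omega

noncomputable def dyadicPeak (a b : ℕ) : ℕ :=
  if h : a ≤ b then ((Icc a b).exists_max_image (padicValNat 2) (nonempty_Icc.2 h)).choose
  else a

theorem dyadicPeak_spec {a b : ℕ} (h : a ≤ b) :
    dyadicPeak a b ∈ Icc a b ∧
      ∀ s ∈ Icc a b, padicValNat 2 s ≤ padicValNat 2 (dyadicPeak a b) := by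
  rw [dyadicPeak, dif_pos h]
  exact ((Icc a b).exists_max_image (padicValNat 2) (nonempty_Icc.2 h)).choose_spec

theorem eq_of_padicValNat_dyadicPeak_eq_zero {a b : ℕ} (ha : 0 < a) (hab : a ≤ b)
    (h : padicValNat 2 (dyadicPeak a b) = 0) : b = a := by
  by_contra hne
  have hmax := (dyadicPeak_spec hab).2
  have hmem : a + 1 ∈ Icc a b := mem_Icc.2 ⟨by omega, by omega⟩
  have := eq_of_padicValNat_two_eq_of_forall_mem_Icc_le ha (m := 0) (fun c hc => h ▸ hmax c hc)
    (left_mem_Icc.2 hab) hmem (by simpa [h] using hmax a (left_mem_Icc.2 hab))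
    (by simpa [h] using hmax _ hmem)
  omega

namespace V2

variable {n : ℕ}

noncomputable def peak (v : V2 n) : ℕ := dyadicPeak v.1.1 (v.1.2.2 - 1)

noncomputable def level (v : V2 n) : ℕ := padicValNat 2 v.peak

-- truncated subtraction merges the two colours of level `0`
noncomputable def color (v : V2 n) : ℕ :=
  2 * v.level + (if v.1.2.1 ≤ v.peak then 0 else 1) - 1

theorem peak_spec (v : V2 n) :
    v.peak ∈ Icc v.1.1 (v.1.2.2 - 1) ∧
      ∀ s ∈ Icc v.1.1 (v.1.2.2 - 1), padicValNat 2 s ≤ v.level :=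
  dyadicPeak_spec (by have := v.2; omega)

theorem level_lt {k : ℕ} (v : V2 (2 ^ k)) : v.level < k := by
  have hmem := mem_Icc.1 (peak_spec v).1
  have hv := v.2
  have hle : 2 ^ v.level ≤ v.peak := Nat.le_of_dvd (by omega) pow_padicValNat_dvd
  exact (Nat.pow_lt_pow_iff_right (a := 2) (by norm_num)).1 (by omega)

theorem color_lt {k : ℕ} (v : V2 (2 ^ k)) : v.color < 2 * k - 1 := by
  have := level_lt v
  unfold color
  split_ifs <;> omega

theorem level_eq_of_color_eq {v w : V2 n} (h : v.color = w.color) : v.level = w.level := by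
  unfold color at h
  split_ifs at h <;> omega

theorem peak_eq_of_rel2 {v w : V2 n} (h : rel2 v.1 w.1) (hl : v.level = w.level) :
    v.peak = w.peak := by
  obtain ⟨hv, hvmax⟩ := peak_spec v
  obtain ⟨hw, hwmax⟩ := peak_spec w
  have := v.2
  have := w.2
  simp only [rel2, mem_Icc] at h hv hw hvmax hwmax
  refine eq_of_padicValNat_two_eq_of_forall_mem_Icc_le (a := v.1.1) (b := w.1.2.2 - 1)
    (by omega) (fun c hc => ?_) (by grind) (by grind) rfl hl.symm
  rw [mem_Icc] at hc
  by_cases hcz : c ≤ v.1.2.2 - 1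
  · exact hvmax c ⟨hc.1, hcz⟩
  · exact (hwmax c ⟨by omega, hc.2⟩).trans_eq hl.symm

theorem color_ne_of_rel2 {v w : V2 n} (h : rel2 v.1 w.1) : v.color ≠ w.color := by
  intro hc
  have hl := level_eq_of_color_eq hc
  have hp := peak_eq_of_rel2 h hl
  have hv := mem_Icc.1 (peak_spec v).1
  have hw := mem_Icc.1 (peak_spec w).1
  have hv2 := v.2
  simp only [rel2] at h
  have hlev : v.level ≠ 0 := fun h0 => by
    have := eq_of_padicValNat_dyadicPeak_eq_zero hv2.1 (by omega) h0
    omega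
  unfold color at hc
  rw [if_pos (by omega), if_neg (by omega)] at hc
  omega

end V2

theorem stmt_6_general (k : ℕ) :
    (G2 (2 ^ k)).chromaticNumber ≤ ((2 * k - 1 : ℕ) : ℕ∞) := by
  refine SimpleGraph.Colorable.chromaticNumber_le
    ⟨SimpleGraph.Coloring.mk (fun v => ⟨v.color, v.color_lt⟩) ?_⟩
  rintro v w (h | h) heq
  · exact V2.color_ne_of_rel2 h (congrArg Fin.val heq)
  · exact V2.color_ne_of_rel2 h (congrArg Fin.val heq).symm

theorem stmt_6 (k : ℕ) (hk : 0 < k) :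
    (G2 (2 ^ k)).chromaticNumber ≤ ((2 * k - 1 : ℕ) : ℕ∞) :=
  stmt_6_general k
end

section
/- For all integers n ≥ 2, the chromatic number of G_2(n) is at most 2⌈log₂(n)⌉ - 1. -/
open Set

lemma exists_two_pow_succ_dvd_between {b m₁ m₂ : ℕ} (hd₁ : 2 ^ b ∣ m₁) (hd₂ : 2 ^ b ∣ m₂)
    (h : m₁ < m₂) : ∃ t, m₁ ≤ t ∧ t ≤ m₂ ∧ 2 ^ (b + 1) ∣ t := by
  have hgap : m₁ + 2 ^ b ≤ m₂ := by
    have := Nat.le_of_dvd (by omega) (Nat.dvd_sub hd₂ hd₁)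
    omega
  obtain ⟨c, rfl⟩ := hd₁
  rcases Nat.even_or_odd c with ⟨d, rfl⟩ | ⟨d, rfl⟩
  · exact ⟨2 ^ b * (d + d), le_rfl, h.le, d, by ring⟩
  · exact ⟨2 ^ b * (2 * d + 1) + 2 ^ b, by omega, hgap, d + 1, by ring⟩

lemma exists_mem_Ico_two_pow_succ_dvd {a c b m₁ m₂ : ℕ} (hm₁ : m₁ ∈ Ico a c) (hm₂ : m₂ ∈ Ico a c)
    (hd₁ : 2 ^ b ∣ m₁) (hd₂ : 2 ^ b ∣ m₂) (hne : m₁ ≠ m₂) : ∃ t ∈ Ico a c, 2 ^ (b + 1) ∣ t := by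
  wlog h : m₁ < m₂ generalizing m₁ m₂
  · exact this hm₂ hm₁ hd₂ hd₁ hne.symm (by omega)
  obtain ⟨t, ht₁, ht₂, hdt⟩ := exists_two_pow_succ_dvd_between hd₁ hd₂ h
  exact ⟨t, ⟨hm₁.1.trans ht₁, ht₂.trans_lt hm₂.2⟩, hdt⟩

open Classical in
/-- The search bound `z` only matters for `x = 0`: for `0 < x`, `2^b ≤ j < z` forces `b < z`. -/
noncomputable def level (x z : ℕ) : ℕ :=
  Nat.findGreatest (fun b => ∃ j ∈ Ico x z, 2 ^ b ∣ j) z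

lemma exists_mem_Ico_two_pow_level_dvd {x z : ℕ} (hxz : x < z) :
    ∃ j ∈ Ico x z, 2 ^ level x z ∣ j := by
  classical
  exact Nat.findGreatest_spec (P := fun b => ∃ j ∈ Ico x z, 2 ^ b ∣ j) (Nat.zero_le z)
    ⟨x, ⟨le_rfl, hxz⟩, by simp⟩

lemma not_exists_mem_Ico_two_pow_dvd_of_level_lt {x z b : ℕ} (hx : 0 < x) (hb : level x z < b) :
    ¬ ∃ j ∈ Ico x z, 2 ^ b ∣ j := by
  classical
  rintro ⟨j, hj, hdj⟩
  have hbj : 2 ^ b ≤ j := Nat.le_of_dvd (hx.trans_le hj.1) hdj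
  have hbz : b ≤ z := by have := Nat.lt_two_pow_self (n := b); have := hj.2; omega
  exact Nat.findGreatest_is_greatest hb hbz ⟨j, hj, hdj⟩

lemma level_lt_clog {x z n : ℕ} (hx : 0 < x) (hxz : x < z) (hzn : z ≤ n) :
    level x z < Nat.clog 2 n := by
  obtain ⟨j, hj, hdj⟩ := exists_mem_Ico_two_pow_level_dvd hxz
  refine (Nat.pow_lt_pow_iff_right one_lt_two).mp ?_
  calc 2 ^ level x z ≤ j := Nat.le_of_dvd (hx.trans_le hj.1) hdj
    _ < n := hj.2.trans_le hzn
    _ ≤ 2 ^ Nat.clog 2 n := Nat.le_pow_clog one_lt_two n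

/-- For `x = x'`, `z = z'` this is the uniqueness of the multiple of `2 ^ level x z` in `[x, z)`. -/
lemma eq_of_two_pow_level_dvd {x z x' z' m m' : ℕ} (hx : 0 < x) (hxx' : x ≤ x') (hx'z : x' ≤ z)
    (hzz' : z ≤ z') (hlevel : level x z = level x' z') (hm : m ∈ Ico x z) (hm' : m' ∈ Ico x' z')
    (hdm : 2 ^ level x z ∣ m) (hdm' : 2 ^ level x z ∣ m') : m = m' := by
  by_contra hne
  obtain ⟨t, ht, hdt⟩ := exists_mem_Ico_two_pow_succ_dvd (a := x) (c := z')
    ⟨hm.1, hm.2.trans_le hzz'⟩ ⟨hxx'.trans hm'.1, hm'.2⟩ hdm hdm' hne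
  rcases lt_or_ge t z with htz | htz
  · exact not_exists_mem_Ico_two_pow_dvd_of_level_lt hx (Nat.lt_succ_self _) ⟨t, ⟨ht.1, htz⟩, hdt⟩
  · exact not_exists_mem_Ico_two_pow_dvd_of_level_lt (hx.trans_le hxx')
      (hlevel ▸ Nat.lt_succ_self _) ⟨t, ⟨hx'z.trans htz, ht.2⟩, hdt⟩

open Classical in
noncomputable def color (p : ℕ × ℕ × ℕ) : ℕ :=
  if level p.1 p.2.2 = 0 then 0
  else 2 * level p.1 p.2.2 - if ∃ j ∈ Ico p.2.1 p.2.2, 2 ^ level p.1 p.2.2 ∣ j then 1 else 0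

lemma color_le (p : ℕ × ℕ × ℕ) : color p ≤ 2 * level p.1 p.2.2 := by
  unfold color
  split_ifs <;> omega

lemma color_add_one_div_two (p : ℕ × ℕ × ℕ) : (color p + 1) / 2 = level p.1 p.2.2 := by
  unfold color
  split_ifs <;> omega

lemma color_ne_of_rel2 {p q : ℕ × ℕ × ℕ} (hp : 0 < p.1) (h : rel2 p q) : color p ≠ color q := by
  obtain ⟨x, y, z⟩ := p
  obtain ⟨x', y', z'⟩ := q
  obtain ⟨hxx', hx'z, hzz', hyx', hzy'⟩ := h
  dsimp only at hp hxx' hx'z hzz' hyx' hzy'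
  intro hcolor
  have hlevel : level x z = level x' z' := by
    rw [← color_add_one_div_two (x, y, z), hcolor, color_add_one_div_two]
  obtain ⟨m, ⟨hxm, hmz⟩, hdm⟩ := exists_mem_Ico_two_pow_level_dvd (show x < z by omega)
  obtain ⟨m', ⟨hx'm', hm'z'⟩, hdm'⟩ := exists_mem_Ico_two_pow_level_dvd (show x' < z' by omega)
  rw [← hlevel] at hdm'
  have hmm' : m = m' :=
    eq_of_two_pow_level_dvd hp hxx'.le hx'z hzz'.le hlevel ⟨hxm, hmz⟩ ⟨hx'm', hm'z'⟩ hdm hdm'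
  subst hmm'
  have hlevel₀ : level x z ≠ 0 := by
    intro h0
    have := eq_of_two_pow_level_dvd hp le_rfl (by omega) le_rfl rfl ⟨le_rfl, by omega⟩ ⟨hxm, hmz⟩
      (by simp [h0]) hdm
    omega
  have hmy : ∃ j ∈ Ico y z, 2 ^ level x z ∣ j := ⟨m, ⟨hyx'.trans hx'm', hmz⟩, hdm⟩
  have hmy' : ¬ ∃ j ∈ Ico y' z', 2 ^ level x' z' ∣ j := by
    rintro ⟨j, ⟨hy'j, hjz'⟩, hdj⟩
    have := eq_of_two_pow_level_dvd (hp.trans hxx') le_rfl (by omega) le_rfl rfl ⟨hx'm', hm'z'⟩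
      ⟨by omega, hjz'⟩ (hlevel ▸ hdm) hdj
    omega
  simp only [color, ← hlevel, if_neg hlevel₀, if_pos hmy, if_neg hmy'] at hcolor
  omega

theorem stmt_8_general (n : ℕ) :
    (G2 n).chromaticNumber ≤ ((2 * Nat.clog 2 n - 1 : ℕ) : ℕ∞) := by
  refine SimpleGraph.Colorable.chromaticNumber_le
    ⟨SimpleGraph.Coloring.mk (fun v => ⟨color v.1, ?_⟩) ?_⟩
  · obtain ⟨⟨x, y, z⟩, hx, -, -, hzn, hxz⟩ := v
    have hlevel : level x z < Nat.clog 2 n := level_lt_clog hx hxz hzn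
    have hcolor : color (x, y, z) ≤ 2 * level x z := color_le _
    show color (x, y, z) < 2 * Nat.clog 2 n - 1
    omega
  · rintro p q (hpq | hqp) hcolor
    · exact color_ne_of_rel2 p.2.1 hpq (congrArg Fin.val hcolor)
    · exact color_ne_of_rel2 q.2.1 hqp (congrArg Fin.val hcolor).symm

theorem stmt_8 (n : ℕ) (hn : 2 ≤ n) :
    (G2 n).chromaticNumber ≤ ((2 * Nat.clog 2 n - 1 : ℕ) : ℕ∞) :=
  stmt_8_general n
end

section
/- For any integer m ≥ 2, the chromatic number of G_2(2m) is at most the chromatic number of G_2(m) plus 2. -/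
/-!
Split the vertices of `G₂(2m)` into those with `z ≤ m`, those with `m < x`, and the rest.
The first two classes are copies of `G₂(m)` (the second after subtracting `m` from every
coordinate), and no edge joins them, because an edge from `(x, y, z)` to `(x', y', z')`
needs `x' ≤ z`; so one colouring of `G₂(m)` colours both. A remaining vertex has
`x ≤ m < z`, and an edge between two such vertices goes from one with `y ≤ x' ≤ m` to one
with `y' ≥ z > m`; so two more colours, chosen by whether `y ≤ m`, finish the colouring.
-/

namespace SimpleGraph

theorem chromaticNumber_le_add_of_forall_colorable {V V' : Type*} {G : SimpleGraph V}
    {G' : SimpleGraph V'} {k : ℕ} (h : ∀ n, G'.Colorable n → G.Colorable (n + k)) :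
    G.chromaticNumber ≤ G'.chromaticNumber + k := by
  rcases eq_or_ne G'.chromaticNumber ⊤ with htop | htop
  · simp [htop]
  · have hG := h _ (G'.colorable_of_chromaticNumber_ne_top htop)
    simpa [ENat.natCast_toNat htop] using hG.chromaticNumber_le

end SimpleGraph

namespace G2

variable {m : ℕ} {α : Type*}

def fold (m : ℕ) (p : ℕ × ℕ × ℕ) : ℕ × ℕ × ℕ :=
  if m < p.1 then (p.1 - m, p.2.1 - m, p.2.2 - m) else p

def IsFoldable (m : ℕ) (p : ℕ × ℕ × ℕ) : Prop :=
  p.2.2 ≤ m ∨ m < p.1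

instance (m : ℕ) : DecidablePred (IsFoldable m) := fun _ => instDecidableOr

def foldVertex (p : V2 (2 * m)) (hp : IsFoldable m p.1) : V2 m :=
  ⟨fold m p.1, by
    obtain ⟨_, _, _, _, _⟩ := p.2
    unfold IsFoldable at hp
    by_cases h : m < p.1.1 <;> simp only [fold, h, ↓reduceIte] <;> omega⟩

theorem rel2_fold {p q : ℕ × ℕ × ℕ} (hpq : rel2 p q) (hp : IsFoldable m p)
    (hq : IsFoldable m q) : rel2 (fold m p) (fold m q) := by
  obtain ⟨_, _, _, _, _⟩ := hpq
  unfold IsFoldable at hp hq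
  by_cases hpx : m < p.1 <;> by_cases hqx : m < q.1 <;>
    simp only [fold, rel2, hpx, hqx, ↓reduceIte] <;> omega

theorem rel2_not_isFoldable {p q : ℕ × ℕ × ℕ} (hpq : rel2 p q)
    (hp : ¬IsFoldable m p) (hq : ¬IsFoldable m q) : p.2.1 ≤ m ∧ ¬q.2.1 ≤ m := by
  obtain ⟨_, _, _, _, _⟩ := hpq
  unfold IsFoldable at hp hq
  omega

def liftColor (C : (G2 m).Coloring α) (p : V2 (2 * m)) : α ⊕ Bool :=
  if hp : IsFoldable m p.1 then .inl (C (foldVertex p hp)) else .inr (decide (p.1.2.1 ≤ m))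

theorem liftColor_ne_of_rel2 (C : (G2 m).Coloring α) {p q : V2 (2 * m)}
    (hpq : rel2 p.1 q.1) : liftColor C p ≠ liftColor C q := by
  unfold liftColor
  by_cases hp : IsFoldable m p.1 <;> by_cases hq : IsFoldable m q.1
  · have hadj : (G2 m).Adj (foldVertex p hp) (foldVertex q hq) := .inl (rel2_fold hpq hp hq)
    simpa [hp, hq] using C.valid hadj
  · simp [hp, hq]
  · simp [hp, hq]
  · simp [hp, hq, rel2_not_isFoldable hpq hp hq]

def liftColoring (C : (G2 m).Coloring α) : (G2 (2 * m)).Coloring (α ⊕ Bool) :=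
  SimpleGraph.Coloring.mk (liftColor C) fun hpq =>
    hpq.elim (liftColor_ne_of_rel2 C) fun h => (liftColor_ne_of_rel2 C h).symm

theorem colorable_two_mul {n : ℕ} (h : (G2 m).Colorable n) : (G2 (2 * m)).Colorable (n + 2) := by
  obtain ⟨C⟩ := h
  simpa using (liftColoring C).colorable

end G2

theorem stmt_9_general (m : ℕ) :
    (G2 (2 * m)).chromaticNumber ≤ (G2 m).chromaticNumber + 2 :=
  SimpleGraph.chromaticNumber_le_add_of_forall_colorable fun _ => G2.colorable_two_mul

theorem stmt_9 (m : ℕ) (hm : 2 ≤ m) :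
    (G2 (2 * m)).chromaticNumber ≤ (G2 m).chromaticNumber + 2 :=
  stmt_9_general m
end

section
/- In the graph G_2(2m), the subgraph induced on A = {(x,y,z) : z ≤ m} is isomorphic to G_2(m) via the identity, the map (x,y,z) ↦ (x+m, y+m, z+m) is an isomorphism from A onto D = {(x,y,z) : m < x}, and there are no edges between A and D. -/
def shift (k : ℕ) (p : ℕ × ℕ × ℕ) : ℕ × ℕ × ℕ :=
  (p.1 + k, p.2.1 + k, p.2.2 + k)

theorem rel2_shift_iff (k : ℕ) (p q : ℕ × ℕ × ℕ) :
    rel2 (shift k p) (shift k q) ↔ rel2 p q := by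
  simp only [rel2, shift, Nat.add_lt_add_iff_right, Nat.add_le_add_iff_right]

theorem G2_adj_iff_of_val_eq {n n' : ℕ} {a b : V2 n} {a' b' : V2 n'}
    (ha : a.1 = a'.1) (hb : b.1 = b'.1) : (G2 n).Adj a b ↔ (G2 n').Adj a' b' := by
  simp only [G2, ha, hb]

theorem G2_adj_shift_iff {n n' : ℕ} (k : ℕ) {a b : V2 n} {a' b' : V2 n'}
    (ha : a'.1 = shift k a.1) (hb : b'.1 = shift k b.1) :
    (G2 n).Adj a b ↔ (G2 n').Adj a' b' := by
  simp only [G2, ha, hb, rel2_shift_iff]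

theorem G2_not_adj_of_lt {n : ℕ} {a b : V2 n} (h : a.1.2.2 < b.1.1) : ¬ (G2 n).Adj a b := by
  obtain ⟨_, hxy, hyz, _, _⟩ := a.2
  rintro (⟨-, hba, -⟩ | ⟨hba, -⟩) <;> omega

theorem exists_V2_val_eq {n : ℕ} (a : V2 n) {n' : ℕ} (h : a.1.2.2 ≤ n') :
    ∃ a' : V2 n', a'.1 = a.1 := by
  obtain ⟨h1, hxy, hyz, -, hxz⟩ := a.2
  exact ⟨⟨a.1, h1, hxy, hyz, h, hxz⟩, rfl⟩

theorem exists_V2_val_eq_shift {n : ℕ} (a : V2 n) {n' k : ℕ} (h : a.1.2.2 + k ≤ n') :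
    ∃ a' : V2 n', a'.1 = shift k a.1 := by
  obtain ⟨h1, hxy, hyz, -, hxz⟩ := a.2
  exact ⟨⟨shift k a.1, by simp only [shift]; omega⟩, rfl⟩

theorem exists_shift_eq_of_lt {n k : ℕ} (d : V2 n) (h : k < d.1.1) :
    ∃ a : V2 n, a.1.2.2 + k ≤ n ∧ d.1 = shift k a.1 := by
  obtain ⟨⟨x, y, z⟩, hd⟩ := d
  obtain ⟨h1, hxy, hyz, hzn, hxz⟩ : 1 ≤ x ∧ x ≤ y ∧ y ≤ z ∧ z ≤ n ∧ x < z := hd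
  change k < x at h
  refine ⟨⟨(x - k, y - k, z - k), by dsimp only; omega⟩, by dsimp only; omega, ?_⟩
  simp only [shift, Prod.mk.injEq]
  omega

theorem stmt_11_general (m : ℕ) :
    -- the identity is an isomorphism between the subgraph induced on
    -- A = {(x,y,z) : z ≤ m} and G₂(m):
    (∀ (a b : V2 (2 * m)) (a' b' : V2 m), a.1 = a'.1 → b.1 = b'.1 →
        ((G2 (2 * m)).Adj a b ↔ (G2 m).Adj a' b')) ∧
    (∀ a' : V2 m, ∃ a : V2 (2 * m), a.1 = a'.1) ∧
    (∀ a : V2 (2 * m), a.1.2.2 ≤ m → ∃ a' : V2 m, a'.1 = a.1) ∧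
    -- (x,y,z) ↦ (x+m, y+m, z+m) is an isomorphism from A onto D = {(x,y,z) : m < x}:
    (∀ (a b ap bp : V2 (2 * m)), a.1.2.2 ≤ m → b.1.2.2 ≤ m →
        ap.1 = (a.1.1 + m, a.1.2.1 + m, a.1.2.2 + m) →
        bp.1 = (b.1.1 + m, b.1.2.1 + m, b.1.2.2 + m) →
        ((G2 (2 * m)).Adj a b ↔ (G2 (2 * m)).Adj ap bp)) ∧
    (∀ a : V2 (2 * m), a.1.2.2 ≤ m →
        ∃ ap : V2 (2 * m), ap.1 = (a.1.1 + m, a.1.2.1 + m, a.1.2.2 + m) ∧ m < ap.1.1) ∧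
    (∀ d : V2 (2 * m), m < d.1.1 →
        ∃ a : V2 (2 * m), a.1.2.2 ≤ m ∧ d.1 = (a.1.1 + m, a.1.2.1 + m, a.1.2.2 + m)) ∧
    -- there are no edges between A and D:
    (∀ a d : V2 (2 * m), a.1.2.2 ≤ m → m < d.1.1 → ¬ (G2 (2 * m)).Adj a d) := by
  refine ⟨fun _ _ _ _ => G2_adj_iff_of_val_eq, fun a' => ?_, fun a hz => exists_V2_val_eq a hz,
    fun _ _ _ _ _ _ => G2_adj_shift_iff m, fun a hz => ?_, fun d hx => ?_,
    fun _ _ hz hx => G2_not_adj_of_lt (hz.trans_lt hx)⟩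
  · exact exists_V2_val_eq a' (a'.2.2.2.2.1.trans (by omega))
  · obtain ⟨ap, hap⟩ := exists_V2_val_eq_shift a (n' := 2 * m) (k := m) (by omega)
    exact ⟨ap, hap, by rw [hap]; exact Nat.lt_add_of_pos_left a.2.1⟩
  · obtain ⟨a, ha, hd⟩ := exists_shift_eq_of_lt d hx
    exact ⟨a, by omega, hd⟩

theorem stmt_11 (m : ℕ) (hm : 2 ≤ m) :
    -- the identity is an isomorphism between the subgraph induced on
    -- A = {(x,y,z) : z ≤ m} and G₂(m):
    (∀ (a b : V2 (2 * m)) (a' b' : V2 m), a.1 = a'.1 → b.1 = b'.1 →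
        ((G2 (2 * m)).Adj a b ↔ (G2 m).Adj a' b')) ∧
    (∀ a' : V2 m, ∃ a : V2 (2 * m), a.1 = a'.1) ∧
    (∀ a : V2 (2 * m), a.1.2.2 ≤ m → ∃ a' : V2 m, a'.1 = a.1) ∧
    -- (x,y,z) ↦ (x+m, y+m, z+m) is an isomorphism from A onto D = {(x,y,z) : m < x}:
    (∀ (a b ap bp : V2 (2 * m)), a.1.2.2 ≤ m → b.1.2.2 ≤ m →
        ap.1 = (a.1.1 + m, a.1.2.1 + m, a.1.2.2 + m) →
        bp.1 = (b.1.1 + m, b.1.2.1 + m, b.1.2.2 + m) →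
        ((G2 (2 * m)).Adj a b ↔ (G2 (2 * m)).Adj ap bp)) ∧
    (∀ a : V2 (2 * m), a.1.2.2 ≤ m →
        ∃ ap : V2 (2 * m), ap.1 = (a.1.1 + m, a.1.2.1 + m, a.1.2.2 + m) ∧ m < ap.1.1) ∧
    (∀ d : V2 (2 * m), m < d.1.1 →
        ∃ a : V2 (2 * m), a.1.2.2 ≤ m ∧ d.1 = (a.1.1 + m, a.1.2.1 + m, a.1.2.2 + m)) ∧
    -- there are no edges between A and D:
    (∀ a d : V2 (2 * m), a.1.2.2 ≤ m → m < d.1.1 → ¬ (G2 (2 * m)).Adj a d) :=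
  stmt_11_general m
end

section
/- Let τ be a primary irreducible type of width k (a sequence in {1,2,3}^ℓ with equal numbers of ones and twos, no proper nonempty initial segment having equal numbers of ones and twos, starting with a 1), and let X = {x_1 < ... < x_k} and Y = {y_1 < ... < y_k} be finite subsets of ℚ with τ(X, Y) = τ. Then x_i < y_i for all i ∈ [k], and x_{i+1} ≤ y_i for all i ∈ [k-1]. -/
/-- The order type `τ(X, Y)` of a pair of finite sets: listing `X ∪ Y` in
increasing order as `z_1 < … < z_ℓ`, the `i`-th entry is `1` if `z_i ∈ X \ Y`,
`2` if `z_i ∈ Y \ X`, and `3` if `z_i ∈ X ∩ Y`. -/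
def orderType {α : Type*} [LinearOrder α] [DecidableEq α] (X Y : Finset α) : List ℕ :=
  ((X ∪ Y).sort (· ≤ ·)).map fun z => if z ∈ X then (if z ∈ Y then 3 else 1) else 2

/-- A finite sequence with entries in `{1,2,3}` is a type iff it has as many
ones as twos. -/
def IsType (τ : List ℕ) : Prop :=
  (∀ a ∈ τ, a = 1 ∨ a = 2 ∨ a = 3) ∧ τ.count 1 = τ.count 2

/-- A nonempty type is irreducible if it is not the concatenation of two
nonempty types. -/
def IsIrredType (τ : List ℕ) : Prop :=
  τ ≠ [] ∧ ∀ s t : List ℕ, τ = s ++ t → IsType s → IsType t → s = [] ∨ t = []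

/-!
Cutting `X ∪ Y` at a down-set cuts `τ(X, Y)` into a prefix and a suffix, namely the order types
of the two pieces. In a primary irreducible type every nonempty proper prefix has more ones than
twos, so below any proper nonempty cut `X` has strictly more elements than `Y`. If `y_i ≤ x_i`,
the cut `{z < y_i}` (nonempty, since the least element of `X ∪ Y` lies in `X \ Y`) contains `i`
elements of `Y` but at most `i` of `X`; if `y_i < x_{i+1}`, the cut `{z ≤ y_i}` contains `i + 1`
elements of `Y` but at most `i + 1` of `X`.
-/

open Finset

lemma IsType.of_append_of_count_eq {s t : List ℕ} (h : IsType (s ++ t))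
    (hs : s.count 1 = s.count 2) : IsType s ∧ IsType t := by
  obtain ⟨hmem, hcount⟩ := h
  simp only [List.count_append] at hcount
  exact ⟨⟨fun a ha => hmem a (List.mem_append_left t ha), hs⟩,
    ⟨fun a ha => hmem a (List.mem_append_right s ha), by omega⟩⟩

/-- The excess of ones over twos along a primary irreducible type starts at `1` and moves by at
most one per letter; reaching `0` at a proper prefix would split the type. -/
lemma count_two_lt_count_one_of_eq_append {τ : List ℕ} (hτ : IsType τ) (hirr : IsIrredType τ)
    (hprim : τ.head? = some 1) {s t : List ℕ} (h : τ = s ++ t) (hs : s ≠ []) (ht : t ≠ []) :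
    s.count 2 < s.count 1 := by
  induction s using List.reverseRecOn generalizing t with
  | nil => exact absurd rfl hs
  | append_singleton s a ih =>
    rcases eq_or_ne s [] with rfl | hs'
    · subst h
      obtain rfl : a = 1 := by simpa using hprim
      simp
    have hlt := ih (t := a :: t) (by simpa using h) hs' (List.cons_ne_nil a t)
    have hle : (s ++ [a]).count 2 ≤ (s ++ [a]).count 1 := by
      simp only [List.count_append, List.count_singleton]
      split_ifs <;> omega
    refine hle.lt_of_ne fun heq => ?_
    obtain ⟨hsa, ht'⟩ := (h ▸ hτ).of_append_of_count_eq heq.symm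
    exact (hirr.2 _ _ h hsa ht').elim
      (List.append_ne_nil_of_right_ne_nil s (List.cons_ne_nil a [])) ht

lemma List.Pairwise.filter_append_filter_not {α : Type*} [Preorder α] {l : List α}
    (hl : l.Pairwise (· ≤ ·)) {p : α → Bool} (hp : ∀ a b, a ≤ b → p b → p a) :
    l.filter p ++ l.filter (fun a => !p a) = l := by
  induction l with
  | nil => rfl
  | cons a l ih =>
    rw [List.pairwise_cons] at hl
    by_cases ha : p a
    · simp [ha, ih hl.2]
    · have hnil : l.filter p = [] :=
        List.filter_eq_nil_iff.2 fun b hb hpb => ha (hp a b (hl.1 b hb) hpb)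
      have hall : l.filter (fun a => !p a) = l :=
        List.filter_eq_self.2 fun b hb => by simpa using fun hpb => ha (hp a b (hl.1 b hb) hpb)
      simp [ha, hnil, hall]

variable {α : Type*} [LinearOrder α]

lemma Finset.sort_filter (s : Finset α) (p : α → Prop) [DecidablePred p] :
    (s.filter p).sort = s.sort.filter (fun a => p a) := by
  classical
  have hnodup := (s.sort_nodup (· ≤ ·)).filter (fun a => decide (p a))
  rw [← (List.toFinset_sort _ hnodup).2 ((s.pairwise_sort (· ≤ ·)).filter _)]
  congr 1
  ext a
  simp

lemma Finset.card_filter_lt_sort_getElem (s : Finset α) {i : ℕ} (hi : i < s.sort.length) :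
    #{z ∈ s | z < s.sort[i]} = i := by
  classical
  have hsorted := s.sortedLT_sort
  have : {z ∈ s | z < s.sort[i]} = (s.sort.take i).toFinset := by
    ext z
    rw [mem_filter, List.mem_toFinset, List.mem_take_iff_getElem, ← mem_sort (· ≤ ·),
      List.mem_iff_getElem]
    constructor
    · rintro ⟨⟨j, hj, rfl⟩, hlt⟩
      exact ⟨j, lt_min (hsorted.getElem_lt_getElem_iff.1 hlt) hj, rfl⟩
    · rintro ⟨j, hj, rfl⟩
      exact ⟨⟨j, _, rfl⟩, hsorted.getElem_lt_getElem_iff.2 (lt_min_iff.1 hj).1⟩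
  rw [this, List.toFinset_card_of_nodup ((s.sort_nodup _).sublist (List.take_sublist _ _)),
    List.length_take_of_le hi.le]

lemma Finset.card_filter_le_sort_getElem (s : Finset α) {i : ℕ} (hi : i < s.sort.length) :
    #{z ∈ s | z ≤ s.sort[i]} = i + 1 := by
  have hmem : s.sort[i] ∈ s := (mem_sort _).1 (List.getElem_mem hi)
  have : {z ∈ s | z ≤ s.sort[i]} = insert s.sort[i] {z ∈ s | z < s.sort[i]} := by
    ext z
    simp only [mem_filter, mem_insert]
    constructor
    · rintro ⟨hz, hle⟩
      exact hle.lt_or_eq.elim (fun h => Or.inr ⟨hz, h⟩) Or.inl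
    · rintro (rfl | ⟨hz, h⟩)
      exacts [⟨hmem, le_rfl⟩, ⟨hz, h.le⟩]
  rw [this, card_insert_of_notMem (by simp), card_filter_lt_sort_getElem s hi]

section orderType

variable [DecidableEq α]

lemma count_orderType (X Y : Finset α) (c : ℕ) :
    (orderType X Y).count c =
      #{z ∈ X ∪ Y | (if z ∈ X then (if z ∈ Y then 3 else 1) else 2) = c} := by
  rw [orderType, ← Multiset.coe_count, ← Multiset.map_coe, sort_eq, Multiset.count_map,
    card_def, filter_val]
  simp_rw [eq_comm]

lemma count_one_orderType (X Y : Finset α) : (orderType X Y).count 1 = #(X \ Y) := by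
  rw [count_orderType]
  congr 1
  ext z
  by_cases hX : z ∈ X <;> by_cases hY : z ∈ Y <;> simp [hX, hY]

lemma count_two_orderType (X Y : Finset α) : (orderType X Y).count 2 = #(Y \ X) := by
  rw [count_orderType]
  congr 1
  ext z
  by_cases hX : z ∈ X <;> by_cases hY : z ∈ Y <;> simp [hX, hY]

lemma orderType_ne_nil {X Y : Finset α} {z : α} (hz : z ∈ X ∪ Y) : orderType X Y ≠ [] := by
  apply List.ne_nil_of_length_pos
  rw [orderType, List.length_map, length_sort]
  exact card_pos.2 ⟨z, hz⟩

lemma orderType_filter (X Y : Finset α) (p : α → Prop) [DecidablePred p] :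
    orderType (X.filter p) (Y.filter p) =
      ((X ∪ Y).sort.filter (fun a => p a)).map
        fun z => if z ∈ X then (if z ∈ Y then 3 else 1) else 2 := by
  rw [orderType, ← filter_union, sort_filter]
  refine List.map_congr_left fun z hz => ?_
  have hpz : p z := by simpa using (List.mem_filter.1 hz).2
  simp [hpz]

lemma orderType_eq_append (X Y : Finset α) (p : α → Prop) [DecidablePred p]
    (hp : ∀ a b, a ≤ b → p b → p a) :
    orderType X Y = orderType (X.filter p) (Y.filter p) ++
      orderType (X.filter (¬ p ·)) (Y.filter (¬ p ·)) := by
  rw [orderType_filter, orderType_filter, ← List.map_append]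
  simp only [decide_not]
  rw [(pairwise_sort _ _).filter_append_filter_not (by simpa using hp), orderType]

lemma exists_lt_of_head_orderType {X Y : Finset α} (hprim : (orderType X Y).head? = some 1)
    {y : α} (hy : y ∈ Y) : ∃ x ∈ X, x < y := by
  rw [orderType] at hprim
  rcases hL : (X ∪ Y).sort with _ | ⟨x, l⟩
  · simp [hL] at hprim
  have hx : x ∈ X ∧ x ∉ Y := by
    rw [hL] at hprim
    by_cases hX : x ∈ X <;> by_cases hY : x ∈ Y <;> simp_all
  have hxy : x ≤ y := by
    have hsorted := (X ∪ Y).pairwise_sort (· ≤ ·)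
    have hmem : y ∈ (X ∪ Y).sort := (mem_sort _).2 (mem_union_right X hy)
    rw [hL, List.pairwise_cons] at hsorted
    rw [hL, List.mem_cons] at hmem
    exact hmem.elim (fun h => h ▸ le_rfl) (hsorted.1 y)
  exact ⟨x, hx.1, hxy.lt_of_ne fun h => hx.2 (h ▸ hy)⟩

lemma card_filter_lt_card_filter {X Y : Finset α} (hτ : IsType (orderType X Y))
    (hirr : IsIrredType (orderType X Y)) (hprim : (orderType X Y).head? = some 1)
    (p : α → Prop) [DecidablePred p] (hp : ∀ a b, a ≤ b → p b → p a)
    (hpos : ∃ z ∈ X ∪ Y, p z) (hneg : ∃ z ∈ X ∪ Y, ¬ p z) :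
    #(Y.filter p) < #(X.filter p) := by
  obtain ⟨z, hz, hpz⟩ := hpos
  obtain ⟨w, hw, hpw⟩ := hneg
  have hcount := count_two_lt_count_one_of_eq_append hτ hirr hprim (orderType_eq_append X Y p hp)
    (orderType_ne_nil (z := z) (by rw [← filter_union]; exact mem_filter.2 ⟨hz, hpz⟩))
    (orderType_ne_nil (z := w) (by rw [← filter_union]; exact mem_filter.2 ⟨hw, hpw⟩))
  rw [count_one_orderType, count_two_orderType] at hcount
  have hX := card_sdiff_add_card_inter (X.filter p) (Y.filter p)
  have hY := card_sdiff_add_card_inter (Y.filter p) (X.filter p)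
  rw [inter_comm] at hY
  omega

end orderType

theorem stmt_14_general (τ : List ℕ) (k : ℕ) (hτ : IsType τ) (hirr : IsIrredType τ)
    (hprim : τ.head? = some 1)
    (X Y : Finset ℚ)
    (hXY : orderType X Y = τ) :
    (∀ i : ℕ, i < k → ∀ xi yi : ℚ,
        (X.sort (· ≤ ·))[i]? = some xi → (Y.sort (· ≤ ·))[i]? = some yi → xi < yi) ∧
    (∀ i : ℕ, i + 1 < k → ∀ xi yi : ℚ,
        (X.sort (· ≤ ·))[i + 1]? = some xi → (Y.sort (· ≤ ·))[i]? = some yi → xi ≤ yi) := by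
  subst hXY
  refine ⟨fun i _ xi yi hxi hyi => ?_, fun i _ xi yi hxi hyi => ?_⟩
  all_goals
    obtain ⟨hiX, rfl⟩ := List.getElem?_eq_some_iff.1 hxi
    obtain ⟨hiY, rfl⟩ := List.getElem?_eq_some_iff.1 hyi
    have hx := (mem_sort _).1 (List.getElem_mem hiX)
    have hy := (mem_sort _).1 (List.getElem_mem hiY)
    by_contra! hyx
  · obtain ⟨x, hx', hxy⟩ := exists_lt_of_head_orderType hprim hy
    have hcut := card_filter_lt_card_filter hτ hirr hprim (· < (Y.sort (· ≤ ·))[i])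
      (fun _ _ hab hb => hab.trans_lt hb) ⟨x, mem_union_left Y hx', hxy⟩
      ⟨_, mem_union_right X hy, lt_irrefl _⟩
    have hle :
        #{z ∈ X | z < (Y.sort (· ≤ ·))[i]} ≤ #{z ∈ X | z < (X.sort (· ≤ ·))[i]} :=
      card_le_card (monotone_filter_right X fun _ _ h => h.trans_le hyx)
    rw [card_filter_lt_sort_getElem Y hiY] at hcut
    rw [card_filter_lt_sort_getElem X hiX] at hle
    omega
  · have hcut := card_filter_lt_card_filter hτ hirr hprim (· ≤ (Y.sort (· ≤ ·))[i])
      (fun _ _ hab hb => hab.trans hb) ⟨_, mem_union_right X hy, le_rfl⟩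
      ⟨_, mem_union_left Y hx, hyx.not_ge⟩
    have hle :
        #{z ∈ X | z ≤ (Y.sort (· ≤ ·))[i]} ≤ #{z ∈ X | z < (X.sort (· ≤ ·))[i + 1]} :=
      card_le_card (monotone_filter_right X fun _ _ h => h.trans_lt hyx)
    rw [card_filter_le_sort_getElem Y hiY] at hcut
    rw [card_filter_lt_sort_getElem X hiX] at hle
    omega

theorem stmt_14 (τ : List ℕ) (k : ℕ) (hτ : IsType τ) (hirr : IsIrredType τ)
    (hprim : τ.head? = some 1) (hwidth : τ.count 1 + τ.count 3 = k)
    (X Y : Finset ℚ) (hX : X.card = k) (hY : Y.card = k)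
    (hXY : orderType X Y = τ) :
    (∀ i : ℕ, i < k → ∀ xi yi : ℚ,
        (X.sort (· ≤ ·))[i]? = some xi → (Y.sort (· ≤ ·))[i]? = some yi → xi < yi) ∧
    (∀ i : ℕ, i + 1 < k → ∀ xi yi : ℚ,
        (X.sort (· ≤ ·))[i + 1]? = some xi → (Y.sort (· ≤ ·))[i]? = some yi → xi ≤ yi) :=
  stmt_14_general τ k hτ hirr hprim X Y hXY
end
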